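/- For every i with 2 ≤ i ≤ p, the element c_i = Σ_{j=0}^{i} C(p−j, i−j)·(−1)^j·a_j·a_1^{i−j}·p^j of ℤ[a_1,…,a_p] is invariant: η_R(c_i) = c_i in ℤ[a_1,…,a_p][r]. -/

import Mathlib

/-!
Fix a prime `p`.  `AZ p = ℤ[a_1,…,a_p]` (the variable `⟨i-1⟩ : Fin p` stands for `a_i`),
`Γ = (AZ p)[r]`, and `etaR` is the unique ring map with
`η_R(a_i) = ∑_{j=0}^{i} C(p-j, i-j) a_j r^{i-j}` (with `a_0 = 1`).
-/

/-- The polynomial ring `ℤ[a_1,…,a_p]`. -/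
abbrev AZ (p : ℕ) : Type := MvPolynomial (Fin p) ℤ

/-- `av p j` is the generator `a_j`, with the convention `a_0 = 1`. -/
noncomputable def av (p : ℕ) (j : ℕ) : AZ p :=
  if j = 0 then 1 else if h : 1 ≤ j ∧ j ≤ p then MvPolynomial.X ⟨j - 1, by omega⟩ else 0

/-- The right unit `η_R : ℤ[a_1,…,a_p] → ℤ[a_1,…,a_p][r]`, determined by
`η_R(a_i) = ∑_{j=0}^{i} C(p-j, i-j)·a_j·r^{i-j}` (here `a_{k+1}` is the variable `k : Fin p`). -/
noncomputable def etaR (p : ℕ) : AZ p →+* Polynomial (AZ p) :=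
  (MvPolynomial.aeval (R := ℤ) (fun k : Fin p =>
    ∑ j ∈ Finset.range (k.1 + 2),
      (Nat.choose (p - j) (k.1 + 1 - j) : Polynomial (AZ p)) *
        Polynomial.C (av p j) * Polynomial.X ^ (k.1 + 1 - j))).toRingHom

/-- The elements `c_i = ∑_{j=0}^{i} C(p-j,i-j)·(-1)^j·a_j·a_1^{i-j}·p^j`. -/
noncomputable def cgen (p i : ℕ) : AZ p :=
  ∑ j ∈ Finset.range (i + 1),
    (Nat.choose (p - j) (i - j) : AZ p) * (-1 : AZ p) ^ j * av p j *
      (av p 1) ^ (i - j) * (p : AZ p) ^ j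

/-!
Write `f(x) = ∑ a_j x^{p-j}`. Over `ℚ`, `c_i` is the coefficient of `y^{p-i}` in
`T(y) = ∑_j (-p)^j a_j (y + a_1)^{p-j} = (-p)^p f(-(y + a_1)/p)`. Since `η_R` replaces `f(x)` by
`f(x + r)` and `a_1` by `a_1 + p r`, it replaces `T(y)` by
`(-p)^p f(-(y + a_1 + p r)/p + r) = T(y)`. The division by `p` is avoided by working with the
homogenization `∑_j a_j x^{p-j} z^j` of `f`, evaluated at `z = -p`.
-/

open Finset Polynomial

section Translate

variable {R : Type*} [CommRing R]

/-- The coefficient of `x^{n-j}` in `∑_m a_m (x + r)^{n-m}`. -/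
noncomputable def translateCoeff (n : ℕ) (a : ℕ → R) (r : R) (j : ℕ) : R :=
  ∑ m ∈ range (j + 1), ((n - m).choose (j - m) : R) * a m * r ^ (j - m)

theorem sum_translateCoeff_mul_pow_mul_pow (n : ℕ) (a : ℕ → R) (r x z : R) :
    ∑ j ∈ range (n + 1), translateCoeff n a r j * x ^ (n - j) * z ^ j =
      ∑ m ∈ range (n + 1), a m * (x + r * z) ^ (n - m) * z ^ m := by
  let g : ℕ → ℕ → R := fun m j =>
    ((n - m).choose (j - m) : R) * a m * r ^ (j - m) * x ^ (n - j) * z ^ j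
  calc ∑ j ∈ range (n + 1), translateCoeff n a r j * x ^ (n - j) * z ^ j
      = ∑ j ∈ Ico 0 (n + 1), ∑ m ∈ Ico 0 (j + 1), g m j := by
        simp only [translateCoeff, sum_mul, range_eq_Ico, g]
    _ = ∑ m ∈ Ico 0 (n + 1), ∑ j ∈ Ico m (n + 1), g m j := (sum_Ico_Ico_comm _ _ _).symm
    _ = ∑ m ∈ range (n + 1), a m * (x + r * z) ^ (n - m) * z ^ m := by
        rw [← range_eq_Ico]
        refine sum_congr rfl fun m hm => ?_
        rw [mem_range] at hm
        rw [sum_Ico_eq_sum_range, add_comm x, add_pow, mul_sum, sum_mul,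
          show n + 1 - m = n - m + 1 by omega]
        refine sum_congr rfl fun k hk => ?_
        rw [mem_range] at hk
        simp only [g, Nat.add_sub_cancel_left, show n - (m + k) = n - m - k by omega, pow_add,
          mul_pow]
        ring

theorem translateCoeff_one (n : ℕ) {a : ℕ → R} (ha : a 0 = 1) (r : R) :
    translateCoeff n a r 1 = a 1 + n * r := by
  simp [translateCoeff, sum_range_succ, ha, add_comm]

theorem map_translateCoeff {S : Type*} [CommRing S] (f : R →+* S) (n : ℕ) (a : ℕ → R) (r : R)
    (j : ℕ) : f (translateCoeff n a r j) = translateCoeff n (f ∘ a) (f r) j := by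
  simp [translateCoeff]

noncomputable def tschirnhaus (n : ℕ) (b : ℕ → R) : R[X] :=
  ∑ j ∈ range (n + 1), C (b j * (-(n : R)) ^ j) * (X + C (b 1)) ^ (n - j)

theorem map_tschirnhaus {S : Type*} [CommRing S] (f : R →+* S) (n : ℕ) (b : ℕ → R) :
    (tschirnhaus n b).map f = tschirnhaus n (f ∘ b) := by
  simp [tschirnhaus, Polynomial.map_sum]

theorem coeff_tschirnhaus (b : ℕ → R) {n i : ℕ} (hi : i ≤ n) :
    (tschirnhaus n b).coeff (n - i) = ∑ j ∈ range (i + 1),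
      ((n - j).choose (i - j) : R) * (-1) ^ j * b j * b 1 ^ (i - j) * (n : R) ^ j := by
  rw [tschirnhaus, finsetSum_coeff]
  simp only [coeff_C_mul, coeff_X_add_C_pow]
  rw [← sum_subset (range_subset_range.2 (by omega : i + 1 ≤ n + 1)) fun j hj hji => ?vanish]
  case vanish =>
    rw [Nat.choose_eq_zero_of_lt (by simp at hj hji; omega), Nat.cast_zero, mul_zero, mul_zero]
  refine sum_congr rfl fun j hj => ?_
  rw [mem_range] at hj
  rw [show n - j - (n - i) = i - j by omega,
    Nat.choose_symm_of_eq_add (show n - j = (n - i) + (i - j) by omega), neg_pow]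
  ring

theorem tschirnhaus_translateCoeff (n : ℕ) {b : ℕ → R} (hb : b 0 = 1) (r : R) :
    tschirnhaus n (translateCoeff n b r) = tschirnhaus n b := by
  set x : R[X] := X + C (translateCoeff n b r 1)
  have hx : x + C r * -(n : R[X]) = X + C (b 1) := by
    simp only [x, translateCoeff_one n hb, map_add, map_mul, map_natCast]
    ring
  calc tschirnhaus n (translateCoeff n b r)
      = ∑ j ∈ range (n + 1),
          translateCoeff n (C ∘ b) (C r) j * x ^ (n - j) * (-(n : R[X])) ^ j := by
        refine sum_congr rfl fun j _ => ?_
        rw [← map_translateCoeff, map_mul, map_pow, map_neg, map_natCast]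
        ring
    _ = ∑ m ∈ range (n + 1), C (b m) * (x + C r * -(n : R[X])) ^ (n - m) * (-(n : R[X])) ^ m :=
        sum_translateCoeff_mul_pow_mul_pow _ _ _ _ _
    _ = tschirnhaus n b := by
        rw [hx, tschirnhaus]
        refine sum_congr rfl fun m _ => ?_
        rw [map_mul, map_pow, map_neg, map_natCast]
        ring

end Translate

theorem av_zero (p : ℕ) : av p 0 = 1 := if_pos rfl

theorem av_eq_zero {p j : ℕ} (h : p < j) : av p j = 0 := by
  rw [av, if_neg (by omega), dif_neg (by omega)]

theorem etaR_av (p j : ℕ) : etaR p (av p j) = translateCoeff p (C ∘ av p) X j := by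
  rcases j with _ | k
  · simp [av_zero, translateCoeff]
  by_cases hk : k < p
  · rw [av, if_neg k.succ_ne_zero, dif_pos (by omega)]
    exact MvPolynomial.aeval_X _ (⟨k, hk⟩ : Fin p)
  · rw [av_eq_zero (by omega), map_zero, translateCoeff]
    refine (sum_eq_zero fun m _ => ?_).symm
    by_cases hm : m ≤ p
    · rw [Nat.choose_eq_zero_of_lt (by omega), Nat.cast_zero, zero_mul, zero_mul]
    · simp [av_eq_zero (not_le.1 hm)]

theorem cgen_eq_coeff_tschirnhaus {p i : ℕ} (hi : i ≤ p) :
    cgen p i = (tschirnhaus p (av p)).coeff (p - i) :=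
  (coeff_tschirnhaus (av p) hi).symm

theorem cgen_invariant_general (p : ℕ) :
    ∀ i : ℕ, 2 ≤ i → i ≤ p → etaR p (cgen p i) = Polynomial.C (cgen p i) := by
  intro i _ hi
  have hη : ⇑(etaR p) ∘ av p = translateCoeff p (C ∘ av p) X := funext (etaR_av p)
  rw [cgen_eq_coeff_tschirnhaus hi, ← coeff_map, ← coeff_map, map_tschirnhaus, map_tschirnhaus,
    hη, tschirnhaus_translateCoeff p (by simp [av_zero])]

/-- For every `2 ≤ i ≤ p` the element `c_i ∈ ℤ[a_1,…,a_p]` is invariant: `η_R(c_i) = c_i`. -/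
theorem cgen_invariant (p : ℕ) (hp : p.Prime) :
    ∀ i : ℕ, 2 ≤ i → i ≤ p → etaR p (cgen p i) = Polynomial.C (cgen p i) :=
  cgen_invariant_general p
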